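/- Let S ⊊ {1,…,n}, let (i₁,t₁,S) and (i₂,t₂,S) be vine curve triples with t₁ ≥ 2 and t₂ ≥ 2, and let k₁, k₂ ∈ ℤ with (i₁,t₁,k₁) ≠ (i₂,t₂,k₂). If H(i₁,t₁,S;k₁) = H(i₂,t₂,S;k₂) (as subsets of W), then 2i₁ + t₁ = 2i₂ + t₂. -/

import Mathlib

namespace Paper

/-- A vine curve triple `(i,t,S)` for genus `g` and `n` markings
(markings are `{1,…,n}` and `S` always contains the first marking `1`). -/
def VineTriple (g n i t : ℕ) (S : Finset ℕ) : Prop :=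
  i ≤ g ∧ 1 ≤ t ∧ i + t ≤ g + 1 ∧ S ⊆ Finset.Icc 1 n ∧ 1 ∈ S ∧
  ((i = 0 ∧ t = 1) → 2 ≤ S.card) ∧
  ((i = 0 ∧ t = 2) → 1 ≤ S.card) ∧
  ((i = g ∧ t = 1) → 2 ≤ (Finset.Icc 1 n \ S).card) ∧
  ((i = g - 1 ∧ t = 2) → 1 ≤ (Finset.Icc 1 n \ S).card)

/-- The stability hyperplane `H(i,t,S;k)` inside the space `W` with
coordinates `x(i,S)` (for divisorial vine triples) and `y j` (for markings):
for `t = 1` it is `{x(i,S) = k + 1/2}`, and for `t ≥ 2` it is the affine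
hyperplane from equation (walls2) of the paper. -/
noncomputable def Hyp (g n : ℕ) (d : ℤ) (i t : ℕ) (S : Finset ℕ) (k : ℤ) :
    Set (((ℕ × Finset ℕ) → ℝ) × (ℕ → ℝ)) :=
  if t = 1 then
    {w | w.1 (i, S) = (k : ℝ) + 1 / 2}
  else
    {w | ((2 * (g : ℝ) - 2 * (i : ℝ) - (t : ℝ)) / (2 * (g : ℝ) - 2)) *
          (∑ j ∈ S, w.2 j) +
        ((2 * (i : ℝ) - 2 + (t : ℝ)) / (2 * (g : ℝ) - 2)) *
          ((d : ℝ) - ∑ j ∈ Finset.Icc 1 n \ S, w.2 j) =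
        (k : ℝ) + (t : ℝ) / 2}

open Finset

lemma exists_sum_eq_sum_eq {α M : Type*} [DecidableEq α] [AddCommMonoid M]
    {S T : Finset α} (hST : Disjoint S T) {a b : α} (ha : a ∈ S) (hb : b ∈ T) (x y : M) :
    ∃ f : α → M, ∑ j ∈ S, f j = x ∧ ∑ j ∈ T, f j = y := by
  refine ⟨Pi.single a x + Pi.single b y, ?_, ?_⟩
  · simp [sum_add_distrib, ha, hST.notMem_of_mem_right_finset hb]
  · simp [sum_add_distrib, hb, hST.notMem_of_mem_left_finset ha]

/-- Test the second equation at the solutions `(c₁, c₁)` and `(c₁ + b₁, c₁ - a₁)` of the first. -/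
lemma eq_of_forall_mul_add_mul_eq_iff {K : Type*} [Field K] {a₁ b₁ c₁ a₂ b₂ c₂ : K}
    (h₁ : a₁ + b₁ = 1) (h₂ : a₂ + b₂ = 1)
    (h : ∀ x y, a₁ * x + b₁ * y = c₁ ↔ a₂ * x + b₂ * y = c₂) : a₁ = a₂ := by
  have e₁ := (h c₁ c₁).mp (by linear_combination c₁ * h₁)
  have e₂ := (h (c₁ + b₁) (c₁ - a₁)).mp (by linear_combination c₁ * h₁)
  linear_combination e₁ - e₂ + a₂ * h₁ - a₁ * h₂

lemma two_mul_sub_two_ne_zero {g : ℕ} (hg : 2 ≤ g) : (2 * (g : ℝ) - 2) ≠ 0 := by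
  have : (2 : ℝ) ≤ g := by exact_mod_cast hg
  linarith

noncomputable def wallCoeffIn (g i t : ℕ) : ℝ :=
  (2 * (g : ℝ) - 2 * (i : ℝ) - (t : ℝ)) / (2 * (g : ℝ) - 2)

noncomputable def wallCoeffOut (g i t : ℕ) : ℝ :=
  (2 * (i : ℝ) - 2 + (t : ℝ)) / (2 * (g : ℝ) - 2)

lemma wallCoeffIn_add_wallCoeffOut {g : ℕ} (hg : 2 ≤ g) (i t : ℕ) :
    wallCoeffIn g i t + wallCoeffOut g i t = 1 := by
  rw [wallCoeffIn, wallCoeffOut, ← add_div, div_eq_one_iff_eq (two_mul_sub_two_ne_zero hg)]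
  ring

lemma wallCoeffIn_injective {g : ℕ} (hg : 2 ≤ g) {i₁ t₁ i₂ t₂ : ℕ}
    (h : wallCoeffIn g i₁ t₁ = wallCoeffIn g i₂ t₂) : 2 * i₁ + t₁ = 2 * i₂ + t₂ := by
  rw [wallCoeffIn, wallCoeffIn, div_left_inj' (two_mul_sub_two_ne_zero hg)] at h
  exact_mod_cast (by linarith : (2 * i₁ + t₁ : ℝ) = 2 * i₂ + t₂)

lemma mem_hyp_iff {g n : ℕ} {d : ℤ} {i t : ℕ} {S : Finset ℕ} {k : ℤ} (ht : t ≠ 1)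
    (w : ((ℕ × Finset ℕ) → ℝ) × (ℕ → ℝ)) :
    w ∈ Hyp g n d i t S k ↔
      wallCoeffIn g i t * ∑ j ∈ S, w.2 j +
        wallCoeffOut g i t * ((d : ℝ) - ∑ j ∈ Icc 1 n \ S, w.2 j) = k + t / 2 := by
  simp only [Hyp, if_neg ht, Set.mem_ofPred_eq, wallCoeffIn, wallCoeffOut]

/-- The two sums in the equation of a wall can be prescribed independently, so equal walls
are equal lines in the plane of those sums. -/
lemma forall_iff_of_hyp_eq {g n : ℕ} {d : ℤ} {S : Finset ℕ} {a b : ℕ} (ha : a ∈ S)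
    (hb : b ∈ Icc 1 n \ S) {i₁ t₁ i₂ t₂ : ℕ} {k₁ k₂ : ℤ} (ht₁ : t₁ ≠ 1) (ht₂ : t₂ ≠ 1)
    (hH : Hyp g n d i₁ t₁ S k₁ = Hyp g n d i₂ t₂ S k₂) (x y : ℝ) :
    wallCoeffIn g i₁ t₁ * x + wallCoeffOut g i₁ t₁ * y = k₁ + t₁ / 2 ↔
      wallCoeffIn g i₂ t₂ * x + wallCoeffOut g i₂ t₂ * y = k₂ + t₂ / 2 := by
  obtain ⟨f, hfS, hfSc⟩ :=
    exists_sum_eq_sum_eq disjoint_sdiff ha hb x ((d : ℝ) - y)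
  have hw := Set.ext_iff.mp hH (0, f)
  rwa [mem_hyp_iff ht₁, mem_hyp_iff ht₂, hfS, hfSc, sub_sub_cancel] at hw

theorem good_walls_general (g n : ℕ) (d : ℤ) (hg : 2 ≤ g)
    (S : Finset ℕ) (hS : S ⊂ Finset.Icc 1 n)
    (i₁ t₁ i₂ t₂ : ℕ) (k₁ k₂ : ℤ)
    (h₁ : VineTriple g n i₁ t₁ S)
    (ht₁ : 2 ≤ t₁) (ht₂ : 2 ≤ t₂)
    (hH : Hyp g n d i₁ t₁ S k₁ = Hyp g n d i₂ t₂ S k₂) :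
    2 * i₁ + t₁ = 2 * i₂ + t₂ := by
  obtain ⟨m, hmI, hmS⟩ := exists_of_ssubset hS
  have hline := forall_iff_of_hyp_eq h₁.2.2.2.2.1 (mem_sdiff.mpr ⟨hmI, hmS⟩)
    (by omega) (by omega) hH
  exact wallCoeffIn_injective hg <| eq_of_forall_mul_add_mul_eq_iff
    (wallCoeffIn_add_wallCoeffOut hg i₁ t₁) (wallCoeffIn_add_wallCoeffOut hg i₂ t₂) hline

/-- Proposition: for `S ⊊ {1,…,n}`, if two distinct hyperplane data
`(i₁,t₁,k₁) ≠ (i₂,t₂,k₂)` with `t₁, t₂ ≥ 2` give the same hyperplane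
`H(i₁,t₁,S;k₁) = H(i₂,t₂,S;k₂)`, then `2i₁ + t₁ = 2i₂ + t₂`. -/
theorem good_walls (g n : ℕ) (d : ℤ) (hg : 2 ≤ g) (hn : 1 ≤ n)
    (S : Finset ℕ) (hS : S ⊂ Finset.Icc 1 n)
    (i₁ t₁ i₂ t₂ : ℕ) (k₁ k₂ : ℤ)
    (h₁ : VineTriple g n i₁ t₁ S) (h₂ : VineTriple g n i₂ t₂ S)
    (ht₁ : 2 ≤ t₁) (ht₂ : 2 ≤ t₂)
    (hne : ¬ (i₁ = i₂ ∧ t₁ = t₂ ∧ k₁ = k₂))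
    (hH : Hyp g n d i₁ t₁ S k₁ = Hyp g n d i₂ t₂ S k₂) :
    2 * i₁ + t₁ = 2 * i₂ + t₂ :=
  good_walls_general g n d hg S hS i₁ t₁ i₂ t₂ k₁ k₂ h₁ ht₁ ht₂ hH

end Paper
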